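/- arXiv:0912.1779 — 4 statements merged into one kernel-verified Lean document; each statement's English description precedes it below -/
import Mathlib

section
/- Let n ≥ 1 and 1 ≤ q ≤ n, and let ω = (ω_I) be a formal q-form on ℂⁿ. Suppose that for every a ∈ (ℂ*)ⁿ the pullback a^*ω is proportional to ω. Then there exist a formal power series f ∈ ℂ[[x_1,…,x_n]] and scalars λ_I ∈ ℂ, one for each q-element subset I of {1,…,n}, such that (∏_{i∈I} x_i)·ω_I = λ_I·f in ℂ[[x_1,…,x_n]] for every q-element subset I. (In other words, ω = f·Σ_I λ_I dx_I/x_I.) -/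
/-- Rescaling of a formal power series: `(rescaleMv a f)` is `f(a₁x₁, …, aₙxₙ)`,
whose coefficient at the multidegree `d` is `(∏ i, a i ^ d i) * (coeff d f)`. -/
noncomputable def rescaleMv {n : ℕ} (a : Fin n → ℂ) (f : MvPowerSeries (Fin n) ℂ) :
    MvPowerSeries (Fin n) ℂ :=
  fun d => (∏ i, a i ^ d i) * MvPowerSeries.coeff d f

/-- The pullback `a^*ω` of a formal `q`-form `ω = (ω_I)_I` under the diagonal map
`x ↦ (a₁x₁, …, aₙxₙ)`: `(a^*ω)_I = (∏_{i ∈ I} a_i) · ω_I(a₁x₁, …, aₙxₙ)`. -/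
noncomputable def pullbackForm {n : ℕ} (a : Fin n → ℂ)
    (ω : Finset (Fin n) → MvPowerSeries (Fin n) ℂ) :
    Finset (Fin n) → MvPowerSeries (Fin n) ℂ :=
  fun I => (∏ i ∈ I, a i) • rescaleMv a (ω I)

/-- `a^*ω` is proportional to `ω` (as formal `q`-forms):
`(a^*ω)_I · ω_J = (a^*ω)_J · ω_I` for all `q`-element subsets `I, J`. -/
def PullbackProportional {n : ℕ} (q : ℕ) (a : Fin n → ℂ)
    (ω : Finset (Fin n) → MvPowerSeries (Fin n) ℂ) : Prop :=
  ∀ I J : Finset (Fin n), I.card = q → J.card = q →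
    pullbackForm a ω I * ω J = pullbackForm a ω J * ω I

/-!
Write `φ_I = x_I ω_I`, so that `ω = Σ_I φ_I dx_I/x_I`. Proportionality of `a^*ω` and `ω` says
`φ_I(ax) φ_J(x) = φ_J(ax) φ_I(x)`. The coefficient of `x^m` on either side is a polynomial in
`a`; two polynomials agreeing on the torus `(ℂ*)ⁿ` are equal, so comparing the coefficients of
`a^v` gives `φ_I[v] φ_J[w] = φ_J[v] φ_I[w]` for all multi-indices `v, w`. All `2 × 2` minors of
the coefficient vectors of the `φ_I` vanish, hence these vectors are multiples of a single one.
-/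

open MvPowerSeries
open Finset.HasAntidiagonal (antidiagonal mem_antidiagonal)

namespace MvPowerSeries

section Rescale

variable {σ R : Type*} [CommSemiring R]

theorem rescale_X (a : σ → R) (i : σ) : rescale a (X i) = a i • X i := by
  classical
  ext d
  rw [coeff_rescale, coeff_smul, coeff_X]
  split_ifs with h <;> simp [h]

theorem rescale_prod_X (a : σ → R) (I : Finset σ) :
    rescale a (∏ i ∈ I, X i) = (∏ i ∈ I, a i) • ∏ i ∈ I, X i := by
  simp only [map_prod, rescale_X, smul_eq_C_mul, Finset.prod_mul_distrib]

end Rescale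

section RescaleCoeffPoly

variable {σ R : Type*} [CommRing R] [DecidableEq σ]

noncomputable def rescaleMulCoeffPoly (f g : MvPowerSeries σ R) (m : σ →₀ ℕ) :
    MvPolynomial σ R :=
  ∑ d ∈ antidiagonal m, MvPolynomial.monomial d.1 (coeff d.1 f * coeff d.2 g)

theorem eval_rescaleMulCoeffPoly (f g : MvPowerSeries σ R) (m : σ →₀ ℕ) (a : σ → R) :
    MvPolynomial.eval a (rescaleMulCoeffPoly f g m) = coeff m (rescale a f * g) := by
  simp only [rescaleMulCoeffPoly, map_sum, MvPolynomial.eval_monomial, coeff_mul, coeff_rescale]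
  exact Finset.sum_congr rfl fun d _ => by ring

theorem coeff_rescaleMulCoeffPoly (f g : MvPowerSeries σ R) (v w : σ →₀ ℕ) :
    MvPolynomial.coeff v (rescaleMulCoeffPoly f g (v + w)) = coeff v f * coeff w g := by
  simp only [rescaleMulCoeffPoly, MvPolynomial.coeff_sum, MvPolynomial.coeff_monomial]
  rw [Finset.sum_eq_single_of_mem (v, w) (mem_antidiagonal.mpr rfl)]
  · simp
  · rintro ⟨v', w'⟩ hd hne
    rw [if_neg]
    rintro rfl
    exact hne (by simpa using (mem_antidiagonal.mp hd))

variable [IsDomain R] [Infinite R]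

theorem coeff_mul_coeff_eq_of_rescale_mul_eq {f g h k : MvPowerSeries σ R}
    (H : ∀ a : σ → R, (∀ i, a i ≠ 0) → rescale a f * g = rescale a h * k) (v w : σ →₀ ℕ) :
    coeff v f * coeff w g = coeff v h * coeff w k := by
  have hpoly : rescaleMulCoeffPoly f g (v + w) = rescaleMulCoeffPoly h k (v + w) := by
    refine MvPolynomial.funext_set (fun _ => {0}ᶜ)
      (fun _ => (Set.finite_singleton 0).infinite_compl) fun a ha => ?_
    rw [eval_rescaleMulCoeffPoly, eval_rescaleMulCoeffPoly, H a fun i => ha i trivial]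
  simpa only [coeff_rescaleMulCoeffPoly] using congrArg (MvPolynomial.coeff v) hpoly

end RescaleCoeffPoly

end MvPowerSeries

theorem exists_eq_smul_of_mul_eq_mul {ι D K : Type*} [Field K] {s : Set ι} {φ : ι → D → K}
    (h : ∀ i ∈ s, ∀ j ∈ s, ∀ v w, φ i v * φ j w = φ j v * φ i w) :
    ∃ (f : D → K) (c : ι → K), ∀ i ∈ s, φ i = c i • f := by
  by_cases hzero : ∀ i ∈ s, φ i = 0
  · exact ⟨0, 0, fun i hi => by simp [hzero i hi]⟩
  push Not at hzero
  obtain ⟨i₀, hi₀, hne⟩ := hzero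
  obtain ⟨v₀, hv₀⟩ := Function.ne_iff.mp hne
  refine ⟨φ i₀, fun i => φ i v₀ / φ i₀ v₀, fun i hi => funext fun w => ?_⟩
  rw [Pi.smul_apply, smul_eq_mul, div_mul_eq_mul_div, eq_div_iff hv₀]
  linear_combination h i₀ hi₀ i hi v₀ w

theorem rescaleMv_eq_rescale {n : ℕ} (a : Fin n → ℂ) (f : MvPowerSeries (Fin n) ℂ) :
    rescaleMv a f = rescale a f := by
  ext d
  rw [coeff_rescale, Finsupp.prod_pow]
  rfl

/-- The coefficient of `ω` in the logarithmic frame `dx_I / x_I`. -/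
noncomputable def logCoeff {n : ℕ} (ω : Finset (Fin n) → MvPowerSeries (Fin n) ℂ)
    (I : Finset (Fin n)) : MvPowerSeries (Fin n) ℂ :=
  (∏ i ∈ I, X i) * ω I

theorem rescale_logCoeff {n : ℕ} (a : Fin n → ℂ) (ω : Finset (Fin n) → MvPowerSeries (Fin n) ℂ)
    (I : Finset (Fin n)) :
    rescale a (logCoeff ω I) = (∏ i ∈ I, X i) * pullbackForm a ω I := by
  rw [logCoeff, map_mul, rescale_prod_X, pullbackForm, rescaleMv_eq_rescale, smul_mul_assoc,
    mul_smul_comm]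

theorem PullbackProportional.rescale_logCoeff_mul_comm {n q : ℕ} {a : Fin n → ℂ}
    {ω : Finset (Fin n) → MvPowerSeries (Fin n) ℂ} (h : PullbackProportional q a ω)
    {I J : Finset (Fin n)} (hI : I.card = q) (hJ : J.card = q) :
    rescale a (logCoeff ω I) * logCoeff ω J = rescale a (logCoeff ω J) * logCoeff ω I := by
  rw [rescale_logCoeff, rescale_logCoeff, logCoeff, logCoeff]
  linear_combination (∏ i ∈ I, X i) * (∏ i ∈ J, X i) * h I J hI hJ

theorem torus_invariant_formal_q_form_normal_form_general
    (n q : ℕ)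
    (ω : Finset (Fin n) → MvPowerSeries (Fin n) ℂ)
    (hinv : ∀ a : Fin n → ℂ, (∀ i, a i ≠ 0) → PullbackProportional q a ω) :
    ∃ (f : MvPowerSeries (Fin n) ℂ) (lam : Finset (Fin n) → ℂ),
      ∀ I : Finset (Fin n), I.card = q →
        (∏ i ∈ I, MvPowerSeries.X i) * ω I = lam I • f :=
  -- a power series is, by definition, its coefficient function `(Fin n →₀ ℕ) → ℂ`
  exists_eq_smul_of_mul_eq_mul (s := {I : Finset (Fin n) | I.card = q}) (φ := logCoeff ω)
    fun _ hI _ hJ => coeff_mul_coeff_eq_of_rescale_mul_eq fun a ha =>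
      (hinv a ha).rescale_logCoeff_mul_comm hI hJ

/-- A formal `q`-form on `ℂⁿ` whose proportionality class is invariant under the
full diagonal torus `(ℂ*)ⁿ` is of the form `f · Σ_I λ_I dx_I/x_I`, i.e.
`(∏_{i∈I} x_i) · ω_I = λ_I · f` for every `q`-element subset `I`. -/
theorem torus_invariant_formal_q_form_normal_form
    (n q : ℕ) (hn : 1 ≤ n) (hq1 : 1 ≤ q) (hqn : q ≤ n)
    (ω : Finset (Fin n) → MvPowerSeries (Fin n) ℂ)
    (hinv : ∀ a : Fin n → ℂ, (∀ i, a i ≠ 0) → PullbackProportional q a ω) :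
    ∃ (f : MvPowerSeries (Fin n) ℂ) (lam : Finset (Fin n) → ℂ),
      ∀ I : Finset (Fin n), I.card = q →
        (∏ i ∈ I, MvPowerSeries.X i) * ω I = lam I • f :=
  torus_invariant_formal_q_form_normal_form_general n q ω hinv
end

section
/- Let μ_1,…,μ_m ∈ ℂ be such that 1, μ_1,…,μ_m are linearly independent over ℚ. If a polynomial P ∈ ℂ[z_1,…,z_m] satisfies P(e^{2πikμ_1},…,e^{2πikμ_m}) = 0 for every integer k, then P = 0. (Consequently the cyclic subgroup of (ℂ*)^m generated by (e^{2πiμ_1},…,e^{2πiμ_m}) is Zariski dense in ℂ^m.) -/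
/-!
Evaluated along the orbit `k ↦ (e^{2πikμ_i})_i`, the monomial `z^d` becomes the character
`k ↦ w_d^k` of `ℤ`, where `w_d = e^{2πi ∑ d_i μ_i}`. If `w_d = w_{d'}` then `∑ (d_i - d'_i) μ_i`
is an integer, so the ℚ-independence of `1, μ_1, …, μ_m` forces `d = d'`. Distinct characters are
linearly independent (Dedekind–Artin), hence so are the monomials restricted to the orbit, and a
polynomial vanishing there has all coefficients zero.
-/

open Complex
open scoped Real

theorem linearIndependent_zpow_units (K : Type*) [Field K] :
    LinearIndependent K (fun (u : Kˣ) (k : ℤ) => (u : K) ^ k) := by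
  have hchar : LinearIndependent K (fun u : Kˣ => ⇑((Units.coeHom K).comp (zpowersHom Kˣ u))) :=
    (linearIndependent_monoidHom (Multiplicative ℤ) K).comp _ fun u v h =>
      Units.ext <| by simpa using DFunLike.congr_fun h (Multiplicative.ofAdd 1)
  have hofAdd := LinearMap.funLeft_injective_of_surjective K K _
    (Multiplicative.ofAdd (α := ℤ)).surjective
  simpa [Function.comp_def, LinearMap.funLeft] using hchar.map' _ (LinearMap.ker_eq_bot.2 hofAdd)

theorem MvPolynomial.eq_zero_of_eval_eq_zero_of_linearIndependent
    {σ ι K : Type*} [Field K] {x : ι → σ → K}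
    (hx : LinearIndependent K (fun d (k : ι) => eval (x k) (monomial d (1 : K))))
    {P : MvPolynomial σ K} (hP : ∀ k, eval (x k) P = 0) : P = 0 := by
  let evalAt : MvPolynomial σ K →ₗ[K] ι → K := LinearMap.pi fun k => (aeval (x k)).toLinearMap
  have hx' : LinearIndependent K (evalAt ∘ basisMonomials σ K) := by
    convert hx using 1
    ext d k
    simp [evalAt, coe_basisMonomials]
  have : Function.Injective evalAt :=
    LinearMap.injective_of_linearIndependent (basisMonomials σ K).span_eq hx'
  exact (injective_iff_map_eq_zero evalAt).1 this P (_root_.funext hP)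

theorem eq_zero_of_sum_smul_eq_intCast {m : ℕ} {μ : Fin m → ℂ}
    (hμ : LinearIndependent ℚ (Fin.cons (1 : ℂ) μ : Fin (m + 1) → ℂ))
    {q : Fin m → ℚ} {n : ℤ} (h : ∑ i, q i • μ i = n) : q = 0 := by
  have hrel : ∑ j, (Fin.cons (-n : ℚ) q : Fin (m + 1) → ℚ) j • (Fin.cons 1 μ : Fin (m + 1) → ℂ) j
      = 0 := by
    simp only [Rat.smul_def] at h
    simp [Fin.sum_univ_succ, Rat.smul_def, h]
  funext i
  simpa using Fintype.linearIndependent_iff.1 hμ _ hrel i.succ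

theorem injective_exp_two_pi_I_mul_sum {m : ℕ} {μ : Fin m → ℂ}
    (hμ : LinearIndependent ℚ (Fin.cons (1 : ℂ) μ : Fin (m + 1) → ℂ)) :
    Function.Injective fun d : Fin m →₀ ℕ => exp (2 * π * I * ∑ i, d i * μ i) := by
  intro d d' h
  obtain ⟨n, hn⟩ := exp_eq_exp_iff_exists_int.1 h
  have hdiff : ∑ i, (d i - d' i : ℚ) • μ i = n := by
    have h2πI : 2 * (π : ℂ) * I ≠ 0 := by simp [Real.pi_ne_zero, I_ne_zero]
    apply mul_left_cancel₀ h2πI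
    simp only [Rat.smul_def, Rat.cast_sub, Rat.cast_natCast, sub_mul, Finset.sum_sub_distrib]
    linear_combination hn
  ext i
  exact_mod_cast sub_eq_zero.1 (congrFun (eq_zero_of_sum_smul_eq_intCast hμ hdiff) i)

theorem eval_exp_monomial {σ : Type*} [Fintype σ] (μ : σ → ℂ) (d : σ →₀ ℕ) (k : ℤ) :
    MvPolynomial.eval (fun i => exp (2 * π * I * k * μ i)) (MvPolynomial.monomial d 1)
      = exp (2 * π * I * ∑ i, d i * μ i) ^ k := by
  rw [MvPolynomial.eval_monomial, one_mul, Finsupp.prod_fintype _ _ fun _ => pow_zero _,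
    ← exp_int_mul]
  simp only [← exp_nat_mul, ← exp_sum, Finset.mul_sum]
  congr 1
  exact Finset.sum_congr rfl fun i _ => by ring

/-- If `1, μ₁, …, μ_m` are linearly independent over `ℚ`, then any polynomial
vanishing on all points `(e^{2πikμ₁}, …, e^{2πikμ_m})`, `k ∈ ℤ`, is zero; i.e.
the cyclic subgroup of `(ℂ*)^m` generated by `(e^{2πiμ₁}, …, e^{2πiμ_m})` is
Zariski dense in `ℂ^m`. -/
theorem cyclic_group_zariski_dense
    (m : ℕ) (μ : Fin m → ℂ)
    (hμ : LinearIndependent ℚ (Fin.cons (1 : ℂ) μ : Fin (m + 1) → ℂ))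
    (P : MvPolynomial (Fin m) ℂ)
    (hP : ∀ k : ℤ,
      MvPolynomial.eval (fun i => Complex.exp (2 * Real.pi * Complex.I * k * μ i)) P = 0) :
    P = 0 := by
  refine MvPolynomial.eq_zero_of_eval_eq_zero_of_linearIndependent ?_ hP
  have hunits : Function.Injective fun d : Fin m →₀ ℕ =>
      Units.mk0 (exp (2 * π * I * ∑ i, d i * μ i)) (exp_ne_zero _) :=
    fun d d' h => injective_exp_two_pi_I_mul_sum hμ (congrArg Units.val h)
  simpa [Function.comp_def, eval_exp_monomial] using
    (linearIndependent_zpow_units ℂ).comp _ hunits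
end

section
/- Let λ_1,…,λ_n ∈ ℂ be linearly independent over ℚ and fix an index i ∈ {1,…,n}. If a polynomial P in the n−1 variables z_j (j ∈ {1,…,n}, j ≠ i) with complex coefficients satisfies P((e^{2πik·λ_j/λ_i})_{j≠i}) = 0 for every integer k, then P = 0. (In other words, the Zariski closure in (ℂ*)^{n−1} of the cyclic group generated by the diagonal matrix with entries e^{2πiλ_j/λ_i}, j ≠ i, is the full diagonal torus (ℂ*)^{n−1}.) -/
/-!
Evaluating `P = ∑ c_d z^d` at the `k`-th power of a point `x` gives `∑ c_d (x^d)^k`, a linear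
combination of the characters `k ↦ (x^d)^k` of `ℕ`. By Dedekind's independence of characters,
`P = 0` as soon as the monomial values `x^d` are pairwise distinct. For
`x_j = e^{2πi λ_j/λ_i}` we have `x^d = e^{2πi (∑ d_j λ_j)/λ_i}`, so `x^d = x^{d'}` means
`∑ (d_j - d'_j) λ_j ∈ ℤ λ_i`, which forces `d = d'` by the linear independence of the `λ_j`.
-/

open Function Complex
open scoped Real

theorem MvPolynomial.eq_zero_of_forall_eval_pow_eq_zero {R σ : Type*} [CommRing R] [IsDomain R]
    {x : σ → R} (hx : Injective fun d : σ →₀ ℕ => d.prod fun j e => x j ^ e)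
    {P : MvPolynomial σ R} (hP : ∀ k : ℕ, eval (x ^ k) P = 0) : P = 0 := by
  classical
  set χ : (σ →₀ ℕ) → Multiplicative ℕ →* R := fun d => powersHom R (d.prod fun j e => x j ^ e)
  have hχ : LinearIndependent R fun d => ⇑(χ d) :=
    (linearIndependent_monoidHom _ R).comp χ ((powersHom R).injective.comp hx)
  have hsum : ∑ d ∈ P.support, P.coeff d • ⇑(χ d) = 0 := by
    funext k
    simpa [χ, eval_eq, Finsupp.prod, ← Finset.prod_pow, ← pow_mul, mul_comm] using hP k.toAdd
  ext d
  by_cases hd : d ∈ P.support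
  · exact linearIndependent_iff'.mp hχ _ _ hsum d hd
  · exact notMem_support_iff.mp hd

theorem LinearIndependent.eq_of_sum_nsmul_eq_add_zsmul {ι V : Type*} [AddCommGroup V]
    {v : ι → V} (hv : LinearIndependent ℤ v) {i : ι} {d d' : {j // j ≠ i} →₀ ℕ} {m : ℤ}
    (h : (d.sum fun j e => e • v j) = (d'.sum fun j e => e • v j) + m • v i) : d = d' := by
  classical
  set c : ι →₀ ℤ := (d.mapRange (↑) Nat.cast_zero).mapDomain Subtype.val -
    (d'.mapRange (↑) Nat.cast_zero).mapDomain Subtype.val - Finsupp.single i m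
  have hc : Finsupp.linearCombination ℤ v c = 0 := by
    rw [map_sub, map_sub, Finsupp.linearCombination_mapDomain, Finsupp.linearCombination_mapDomain,
      Finsupp.linearCombination_single, Finsupp.linearCombination_apply,
      Finsupp.linearCombination_apply, Finsupp.sum_mapRange_index (by simp),
      Finsupp.sum_mapRange_index (by simp)]
    simp only [comp_apply, natCast_zsmul, h]
    abel
  ext j
  have hcj := DFunLike.congr_fun (linearIndependent_iff.mp hv c hc) j.1
  simpa [c, Finsupp.mapDomain_apply Subtype.val_injective, Finsupp.single_apply, j.2.symm,
    sub_eq_zero] using hcj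

theorem Complex.finsuppProd_exp_pow {σ : Type*} (w : σ → ℂ) (d : σ →₀ ℕ) :
    (d.prod fun j e => exp (w j) ^ e) = exp (d.sum fun j e => e * w j) := by
  simp only [Finsupp.prod, Finsupp.sum, exp_sum, exp_nat_mul]

theorem Complex.injective_prod_exp_two_pi_I_div_pow {ι : Type*} {lam : ι → ℂ}
    (hlam : LinearIndependent ℤ lam) (i : ι) :
    Injective fun d : {j // j ≠ i} →₀ ℕ =>
      d.prod fun j e => exp (2 * π * I * (lam j / lam i)) ^ e := by
  intro d d' h
  have hi : lam i ≠ 0 := hlam.ne_zero i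
  have hsum (d : {j // j ≠ i} →₀ ℕ) : (d.sum fun j e => e * (2 * π * I * (lam j / lam i))) =
      2 * π * I / lam i * d.sum fun j e => e • lam j := by
    rw [Finsupp.mul_sum]
    refine Finsupp.sum_congr fun j _ => ?_
    rw [nsmul_eq_mul]
    ring
  obtain ⟨m, hm⟩ := exp_eq_exp_iff_exists_int.mp <| by
    simpa only [finsuppProd_exp_pow, hsum] using h
  refine hlam.eq_of_sum_nsmul_eq_add_zsmul (m := m) ?_
  rw [zsmul_eq_mul]
  field_simp at hm
  linear_combination hm

/-- If `λ₁, …, λₙ` are linearly independent over `ℚ` and `i` is a fixed index,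
then any polynomial in the variables `z_j`, `j ≠ i`, vanishing on all points
`((e^{2πik·λ_j/λ_i})_{j ≠ i})`, `k ∈ ℤ`, is zero; i.e. the Zariski closure of
the cyclic group generated by the diagonal matrix with entries `e^{2πiλ_j/λ_i}`,
`j ≠ i`, is the full diagonal torus `(ℂ*)^{n-1}`. -/
theorem holonomy_closure_is_maximal_torus
    (n : ℕ) (lam : Fin n → ℂ) (hlam : LinearIndependent ℚ lam) (i : Fin n)
    (P : MvPolynomial {j : Fin n // j ≠ i} ℂ)
    (hP : ∀ k : ℤ,
      MvPolynomial.eval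
        (fun j : {j : Fin n // j ≠ i} =>
          Complex.exp (2 * Real.pi * Complex.I * k * (lam j.1 / lam i))) P = 0) :
    P = 0 := by
  refine MvPolynomial.eq_zero_of_forall_eval_pow_eq_zero
    (injective_prod_exp_two_pi_I_div_pow (hlam.restrict_scalars' ℤ) i) fun k => ?_
  have hpow : (fun j : {j : Fin n // j ≠ i} => exp (2 * π * I * (lam j / lam i))) ^ k =
      fun j => exp (2 * π * I * (k : ℤ) * (lam j.1 / lam i)) := by
    funext j
    rw [Pi.pow_apply, ← exp_nat_mul]
    push_cast
    ring_nf
  rw [hpow]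
  exact hP k
end

section
/- Let λ_1,…,λ_n ∈ ℂ be linearly independent over ℚ, let 1 ≤ q ≤ n, and let ω be a formal q-form on ℂⁿ. For t ∈ ℂ write φ_t = (e^{λ_1 t},…,e^{λ_n t}) ∈ (ℂ*)ⁿ. If for every t ∈ ℂ the pullback φ_t^*ω is proportional to ω, then for every a ∈ (ℂ*)ⁿ the pullback a^*ω is proportional to ω. (The stabilizer of the proportionality class of ω is a Zariski closed subgroup of the torus containing the one-parameter subgroup determined by the flow of Σ_i λ_i x_i ∂/∂x_i, hence is all of (ℂ*)ⁿ.) -/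
/-!
For fixed `I`, `J` and a multidegree `e`, the coefficient of `x^e` in
`(a^*ω)_I ω_J - (a^*ω)_J ω_I` is a polynomial `P` in `a`. Along the flow the monomial `a^m`
becomes `exp (⟨m, λ⟩ t)`; distinct `m` give distinct exponents `⟨m, λ⟩` by the `ℚ`-independence
of the `λᵢ`, so Artin's independence of characters turns the vanishing of `P` along the flow
into `P = 0`, i.e. into the vanishing at every `a`.
-/

open MvPolynomial

noncomputable def expChar (μ : ℂ) : Multiplicative ℂ →* ℂ where
  toFun t := Complex.exp (μ * t.toAdd)
  map_one' := by simp
  map_mul' x y := by simp [toAdd_mul, mul_add, Complex.exp_add]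

lemma hasDerivAt_exp_mul (μ : ℂ) : HasDerivAt (fun t : ℂ => Complex.exp (μ * t)) μ 0 := by
  simpa using ((hasDerivAt_id (0 : ℂ)).const_mul μ).cexp

lemma expChar_injective : Function.Injective expChar := fun μ ν h => by
  have := congrArg (fun f : Multiplicative ℂ →* ℂ => deriv (fun t : ℂ => f (.ofAdd t)) 0) h
  simpa [expChar, (hasDerivAt_exp_mul _).deriv] using this

lemma linearIndependent_exp_mul :
    LinearIndependent ℂ (fun μ : ℂ => fun t : ℂ => Complex.exp (μ * t)) :=
  ((linearIndependent_monoidHom (Multiplicative ℂ) ℂ).comp expChar expChar_injective).map'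
    (LinearMap.funLeft ℂ ℂ Multiplicative.ofAdd)
    (LinearMap.ker_eq_bot.mpr (LinearMap.funLeft_injective_of_surjective _ _ _
      Multiplicative.ofAdd.surjective))

lemma LinearIndependent.injective_natWeight {σ : Type*} {lam : σ → ℂ}
    (hlam : LinearIndependent ℚ lam) :
    Function.Injective fun m : σ →₀ ℕ => m.sum fun i k => (k : ℂ) * lam i := by
  have key (m : σ →₀ ℕ) : Finsupp.linearCombination ℚ lam (m.mapRange Nat.cast Nat.cast_zero)
      = m.sum fun i k => (k : ℂ) * lam i := by
    simp [Finsupp.linearCombination_apply, Finsupp.sum_mapRange_index, Nat.cast_smul_eq_nsmul]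
  intro m m' h
  simp only [← key] at h
  exact Finsupp.mapRange_injective _ _ Nat.cast_injective
    (hlam.finsuppLinearCombination_injective h)

lemma MvPolynomial.eq_zero_of_eval_exp_eq_zero {σ : Type*} {lam : σ → ℂ}
    (hlam : LinearIndependent ℚ lam) {P : MvPolynomial σ ℂ}
    (h : ∀ t, eval (fun i => Complex.exp (lam i * t)) P = 0) : P = 0 := by
  have hli := linearIndependent_exp_mul.comp _ hlam.injective_natWeight
  have hsum : ∑ m ∈ P.support, P.coeff m •
      (fun t => Complex.exp ((m.sum fun i k => (k : ℂ) * lam i) * t)) = 0 := by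
    funext t
    rw [Pi.zero_apply, ← h t, eval_eq]
    simp [Finset.sum_apply, Finsupp.sum, Finset.sum_mul, Complex.exp_sum, ← Complex.exp_nat_mul,
      mul_assoc]
  ext m
  by_cases hm : m ∈ P.support
  · exact linearIndependent_iff'.mp hli _ _ hsum m hm
  · simpa using hm

noncomputable def rescaleMulCoeffPoly {n : ℕ} (f g : MvPowerSeries (Fin n) ℂ)
    (e : Fin n →₀ ℕ) :
    MvPolynomial (Fin n) ℂ :=
  ∑ p ∈ Finset.HasAntidiagonal.antidiagonal e,
    monomial p.1 (MvPowerSeries.coeff p.1 f * MvPowerSeries.coeff p.2 g)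

lemma coeff_rescaleMv_mul {n : ℕ} (a : Fin n → ℂ) (f g : MvPowerSeries (Fin n) ℂ)
    (e : Fin n →₀ ℕ) :
    MvPowerSeries.coeff e (rescaleMv a f * g) = eval a (rescaleMulCoeffPoly f g e) := by
  rw [MvPowerSeries.coeff_mul, rescaleMulCoeffPoly, map_sum]
  refine Finset.sum_congr rfl fun p _ => ?_
  rw [eval_monomial, Finsupp.prod_pow]
  simp only [rescaleMv, MvPowerSeries.coeff_apply]
  ring

lemma coeff_pullbackForm_mul {n : ℕ} (a : Fin n → ℂ)
    (ω : Finset (Fin n) → MvPowerSeries (Fin n) ℂ) (I : Finset (Fin n))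
    (g : MvPowerSeries (Fin n) ℂ) (e : Fin n →₀ ℕ) :
    MvPowerSeries.coeff e (pullbackForm a ω I * g)
      = eval a ((∏ i ∈ I, X i) * rescaleMulCoeffPoly (ω I) g e) := by
  rw [pullbackForm, smul_mul_assoc, map_smul, coeff_rescaleMv_mul, map_mul, map_prod]
  simp

theorem flow_invariant_implies_torus_invariant_general
    (n q : ℕ)
    (lam : Fin n → ℂ) (hlam : LinearIndependent ℚ lam)
    (ω : Finset (Fin n) → MvPowerSeries (Fin n) ℂ)
    (hflow : ∀ t : ℂ, PullbackProportional q (fun i => Complex.exp (lam i * t)) ω) :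
    ∀ a : Fin n → ℂ, (∀ i, a i ≠ 0) → PullbackProportional q a ω := by
  intro a _ I J hI hJ
  ext e
  set P := (∏ i ∈ I, X i) * rescaleMulCoeffPoly (ω I) (ω J) e
    - (∏ i ∈ J, X i) * rescaleMulCoeffPoly (ω J) (ω I) e
  have hP (b : Fin n → ℂ) : MvPowerSeries.coeff e (pullbackForm b ω I * ω J)
      - MvPowerSeries.coeff e (pullbackForm b ω J * ω I) = eval b P := by
    simp only [P, map_sub, coeff_pullbackForm_mul]
  have hP0 : P = 0 := eq_zero_of_eval_exp_eq_zero hlam fun t => by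
    rw [← hP, hflow t I J hI hJ, sub_self]
  simpa [hP0, sub_eq_zero] using hP a

/-- If the proportionality class of a formal `q`-form `ω` is preserved by the
one-parameter subgroup `t ↦ (e^{λ₁t}, …, e^{λₙt})` with `λ₁, …, λₙ` linearly
independent over `ℚ`, then it is preserved by the whole torus `(ℂ*)ⁿ`. -/
theorem flow_invariant_implies_torus_invariant
    (n q : ℕ) (hq1 : 1 ≤ q) (hqn : q ≤ n)
    (lam : Fin n → ℂ) (hlam : LinearIndependent ℚ lam)
    (ω : Finset (Fin n) → MvPowerSeries (Fin n) ℂ)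
    (hflow : ∀ t : ℂ, PullbackProportional q (fun i => Complex.exp (lam i * t)) ω) :
    ∀ a : Fin n → ℂ, (∀ i, a i ≠ 0) → PullbackProportional q a ω :=
  flow_invariant_implies_torus_invariant_general n q lam hlam ω hflow
end
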